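/- Let S be a positive operator on a right quaternionic Hilbert space given by S = Σ_{i=1}^n |η^i⟩⟨η^i| for a linearly independent set {η^1,…,η^n}. Then a linearly independent set {ξ^1,…,ξ^n} satisfies S = Σ_{i=1}^n |ξ^i⟩⟨ξ^i| if and only if there is an n×n quaternionic unitary matrix u = (u_{ji}) with ξ^i = Σ_{j=1}^n η^j u_{ji} for all i. -/

import Mathlib

noncomputable section

open MulOpposite

abbrev Quat := Quaternion ℝ

class RQH (V : Type*) [NormedAddCommGroup V] [Module Quatᵐᵒᵖ V] where
  inn : V → V → Quat
  conj_symm : ∀ φ ψ : V, star (inn φ ψ) = inn ψ φ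
  add_right : ∀ φ ψ ω : V, inn φ (ψ + ω) = inn φ ψ + inn φ ω
  smul_right : ∀ (φ ψ : V) (q : Quat), inn φ (op q • ψ) = inn φ ψ * q
  norm_sq : ∀ φ : V, inn φ φ = ((‖φ‖ ^ 2 : ℝ) : Quat)

open RQH

variable {V : Type*} [NormedAddCommGroup V] [Module Quatᵐᵒᵖ V] [CompleteSpace V] [RQH V]

def IsBddRL (A : V → V) : Prop :=
  (∀ x y : V, A (x + y) = A x + A y) ∧
  (∀ (q : Quatᵐᵒᵖ) (x : V), A (q • x) = q • A x) ∧
  (∃ C : ℝ, ∀ x : V, ‖A x‖ ≤ C * ‖x‖)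

def IsSA (A : V → V) : Prop := ∀ φ ψ : V, inn (A φ) ψ = inn φ (A ψ)

def IsPos (A : V → V) : Prop := ∀ φ : V, ∃ r : ℝ, 0 ≤ r ∧ inn (A φ) φ = (r : Quat)

def opN (A : V → V) : ℝ := sSup { r : ℝ | ∃ φ : V, ‖φ‖ = 1 ∧ r = ‖A φ‖ }

def mA (A : V → V) : ℝ := sInf { r : ℝ | ∃ φ : V, ‖φ‖ = 1 ∧ r = (inn (A φ) φ).re }

def MA (A : V → V) : ℝ := sSup { r : ℝ | ∃ φ : V, ‖φ‖ = 1 ∧ r = (inn (A φ) φ).re }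

def Rq (A : V → V) (l : Quat) (ψ : V) : V :=
  A (A ψ) - op ((2 * l.re : ℝ) : Quat) • A ψ + op ((‖l‖ ^ 2 : ℝ) : Quat) • ψ

def SInv (T : V → V) : Prop :=
  ∃ B : V → V, IsBddRL B ∧ (∀ x, T (B x) = x) ∧ (∀ x, B (T x) = x)

def sspec (A : V → V) : Set Quat := { l | ¬ SInv (Rq A l) }

/-!
Write `x ⬝ a` for the family `k ↦ ∑ j, x j a_{jk}` and `S_x = ∑ |xⁱ⟩⟨xⁱ|`. A direct computation
gives `S_{x ⬝ a} = S_x` whenever `a a† = 1`, and `⟨(x ⬝ a)_i, φ_k⟩ = (a† G)_{ik}` with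
`G_{jk} = ⟨x_j, φ_k⟩`. Conversely, a linearly independent family `ξ` admits a dual family `φ`
with `⟨ξ_i, φ_k⟩ = δ_{ik}`, since the Gram map of an independent family is an injective, hence
surjective, endomorphism of `ℍⁿ`. Evaluating `S_η = S_ξ` on the duals of `ξ` gives `ξ = η ⬝ u`
with `u_{jk} = ⟨η_j, φ_k⟩`, on the duals of `η` it gives `η = ξ ⬝ u†`, and independence of
`η` and `ξ` turns `η = η ⬝ (u u†)` and `ξ = ξ ⬝ (u† u)` into unitarity.
-/

open scoped Matrix

section RightLinComb

variable {ι κ μ R V : Type*} [Fintype ι] [Ring R] [AddCommGroup V] [Module Rᵐᵒᵖ V]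

def linComb (x : ι → V) (c : ι → R) : V := ∑ i, op (c i) • x i

/-- The family `x ⬝ a`: its `k`-th member is `∑ j, x j a_{jk}`. -/
def familyMul (x : ι → V) (a : Matrix ι κ R) : κ → V := fun k => linComb x fun j => a j k

lemma linComb_injective {x : ι → V} (hx : LinearIndependent Rᵐᵒᵖ x) :
    Function.Injective (linComb x : (ι → R) → V) := fun _ _ h =>
  funext fun i => op_injective <| congrFun (hx.fintypeLinearCombination_injective h) i

lemma linComb_familyMul [Fintype κ] (x : ι → V) (a : Matrix ι κ R) (c : κ → R) :
    linComb (familyMul x a) c = linComb x (a *ᵥ c) := by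
  simp only [linComb, familyMul, Matrix.mulVec, dotProduct, Finset.smul_sum, smul_smul,
    ← op_mul, Finset.op_sum, Finset.sum_smul]
  exact Finset.sum_comm

lemma familyMul_familyMul [Fintype κ] (x : ι → V) (a : Matrix ι κ R) (b : Matrix κ μ R) :
    familyMul (familyMul x a) b = familyMul x (a * b) :=
  funext fun _ => linComb_familyMul x a _

lemma familyMul_one [DecidableEq ι] (x : ι → V) : familyMul x (1 : Matrix ι ι R) = x := by
  funext k
  simp only [familyMul, linComb, Matrix.one_apply, apply_ite op, op_one, op_zero, ite_smul,
    one_smul, zero_smul, Finset.sum_ite_eq', Finset.mem_univ, if_true]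

lemma familyMul_injective {x : ι → V} (hx : LinearIndependent Rᵐᵒᵖ x) :
    Function.Injective (familyMul x : Matrix ι κ R → κ → V) := fun _ _ h =>
  Matrix.ext fun j k => congrFun (linComb_injective hx (congrFun h k)) j

end RightLinComb

section QuaternionicHilbert

variable {ι κ μ V : Type*} [Fintype ι] [NormedAddCommGroup V] [Module Quatᵐᵒᵖ V] [RQH V]

/-- `⟨φ, ψ q⟩ = ⟨φ, ψ⟩ q` makes `op ∘ ⟨φ, ·⟩` linear over `ℍᵐᵒᵖ`. -/
def innₗ (φ : V) : V →ₗ[Quatᵐᵒᵖ] Quatᵐᵒᵖ where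
  toFun ψ := op (inn φ ψ)
  map_add' ψ ω := by rw [add_right, op_add]
  map_smul' q ψ := by
    rw [← op_unop q, smul_right]
    rfl

/-- The operator `S = ∑ |xⁱ⟩⟨xⁱ|`. -/
def frameOp (x : ι → V) (φ : V) : V := linComb x fun i => inn (x i) φ

def gram (x : ι → V) (φ : κ → V) : Matrix ι κ Quat := fun i k => inn (x i) (φ k)

lemma inn_add_left (φ ψ ω : V) : inn (φ + ψ) ω = inn φ ω + inn ψ ω := by
  rw [← conj_symm, add_right, star_add, conj_symm, conj_symm]

lemma inn_smul_left (φ ψ : V) (q : Quat) : inn (op q • φ) ψ = star q * inn φ ψ := by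
  rw [← conj_symm, smul_right, star_mul, conj_symm]

lemma inn_linComb_left (x : ι → V) (c : ι → Quat) (ψ : V) :
    inn (linComb x c) ψ = ∑ i, star (c i) * inn (x i) ψ := by
  rw [linComb]
  exact (map_sum (AddMonoidHom.mk' (inn · ψ) fun φ φ' => inn_add_left φ φ' ψ) _ _).trans
    (Finset.sum_congr rfl fun i _ => inn_smul_left _ _ _)

lemma eq_zero_of_inn_self_eq_zero {φ : V} (h : inn φ φ = 0) : φ = 0 := by
  rw [norm_sq, ← Quaternion.coe_zero, Quaternion.coe_inj, sq_eq_zero_iff] at h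
  exact norm_eq_zero.mp h

lemma inn_familyMul_left [Fintype κ] (x : ι → V) (a : Matrix ι κ Quat) (ψ : V) :
    (fun k => inn (familyMul x a k) ψ) = aᴴ *ᵥ fun j => inn (x j) ψ :=
  funext fun _ => inn_linComb_left x _ ψ

lemma gram_familyMul [Fintype κ] (x : ι → V) (a : Matrix ι κ Quat) (φ : μ → V) :
    gram (familyMul x a) φ = aᴴ * gram x φ :=
  Matrix.ext fun i k => congrFun (inn_familyMul_left x a (φ k)) i

lemma familyMul_gram (x : ι → V) (φ : κ → V) :
    familyMul x (gram x φ) = fun k => frameOp x (φ k) :=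
  rfl

lemma frameOp_familyMul [Fintype κ] [DecidableEq ι] {x : ι → V} {a : Matrix ι κ Quat}
    (ha : a * aᴴ = 1) :
    frameOp (familyMul x a) = frameOp x := by
  funext ψ
  rw [frameOp, inn_familyMul_left, linComb_familyMul, Matrix.mulVec_mulVec, ha,
    Matrix.one_mulVec, frameOp]

/-- The Gram map of an independent family is injective: a combination orthogonal to every
member of the family is orthogonal to itself. -/
lemma surjective_pi_innₗ {x : ι → V} (hx : LinearIndependent Quatᵐᵒᵖ x) :
    Function.Surjective (LinearMap.pi fun i => innₗ (x i)) := by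
  let T : (ι → Quatᵐᵒᵖ) →ₗ[Quatᵐᵒᵖ] ι → Quatᵐᵒᵖ :=
    (LinearMap.pi fun i => innₗ (x i)) ∘ₗ Fintype.linearCombination Quatᵐᵒᵖ x
  have hT : Function.Injective T := by
    refine (injective_iff_map_eq_zero T).mpr fun c hc => hx.fintypeLinearCombination_injective ?_
    have horth (i : ι) : inn (x i) (linComb x (unop ∘ c)) = 0 := congrArg unop (congrFun hc i)
    have hself : inn (linComb x (unop ∘ c)) (linComb x (unop ∘ c)) = 0 := by
      simp [inn_linComb_left, horth]
    rw [map_zero]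
    exact eq_zero_of_inn_self_eq_zero hself
  have hT' := LinearMap.injective_iff_surjective.mp hT
  rw [LinearMap.coe_comp] at hT'
  exact hT'.of_comp

lemma exists_gram_eq_one [DecidableEq ι] {x : ι → V} (hx : LinearIndependent Quatᵐᵒᵖ x) :
    ∃ φ : ι → V, gram x φ = 1 := by
  choose φ hφ using fun k => surjective_pi_innₗ hx fun i => op ((1 : Matrix ι ι Quat) i k)
  exact ⟨φ, Matrix.ext fun i k => congrArg unop (congrFun (hφ k) i)⟩

theorem frameOp_eq_iff_exists_unitary [DecidableEq ι] {η ξ : ι → V}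
    (hη : LinearIndependent Quatᵐᵒᵖ η) (hξ : LinearIndependent Quatᵐᵒᵖ ξ) :
    frameOp η = frameOp ξ ↔
      ∃ u : Matrix ι ι Quat, u * uᴴ = 1 ∧ uᴴ * u = 1 ∧ ξ = familyMul η u := by
  refine ⟨fun h => ?_, fun ⟨u, hu, _, hξu⟩ => hξu ▸ (frameOp_familyMul hu).symm⟩
  obtain ⟨φ, hφ⟩ := exists_gram_eq_one hξ
  obtain ⟨ψ, hψ⟩ := exists_gram_eq_one hη
  set u := gram η φ
  have hξη : ξ = familyMul η u := by
    rw [familyMul_gram, h, ← familyMul_gram, hφ, familyMul_one]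
  have hηξ : η = familyMul ξ uᴴ := by
    calc η = familyMul ξ (gram ξ ψ) := by
          rw [familyMul_gram, ← h, ← familyMul_gram, hψ, familyMul_one]
      _ = familyMul ξ uᴴ := by rw [hξη, gram_familyMul, hψ, Matrix.mul_one, ← hξη]
  refine ⟨u, familyMul_injective hη ?_, familyMul_injective hξ ?_, hξη⟩
  · rw [← familyMul_familyMul, ← hξη, ← hηξ, familyMul_one]
  · rw [← familyMul_familyMul, ← hηξ, ← hξη, familyMul_one]

end QuaternionicHilbert

/-- Two linearly independent families give the same operator S = Σᵢ|ηⁱ⟩⟨ηⁱ| iff they are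
related by a quaternionic unitary matrix. -/
theorem stmt18 (n : ℕ) (η ξ : Fin n → V)
    (hη : LinearIndependent Quatᵐᵒᵖ η) (hξ : LinearIndependent Quatᵐᵒᵖ ξ) :
    (∀ φ : V, ∑ i : Fin n, op (inn (η i) φ) • η i = ∑ i : Fin n, op (inn (ξ i) φ) • ξ i) ↔
      ∃ u : Matrix (Fin n) (Fin n) Quat,
        u * u.conjTranspose = 1 ∧ u.conjTranspose * u = 1 ∧
        ∀ i : Fin n, ξ i = ∑ j : Fin n, op (u j i) • η j := by
  have key := frameOp_eq_iff_exists_unitary hη hξ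
  simp only [funext_iff] at key
  exact key
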